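/- Under the assumptions and conclusions of the bootstrap proposition for the model system (in particular Γ := −Im(G, R_H^+(ω_{N₀})G) > 0, |z(0)| + ‖η(0)‖_{ℓ²} ≤ ε < ε₀, ‖η‖_{Stz∩L²ℓ^{2,−σ}} ≤ Cε and ‖z₁^{N₀−1}z₂^{N₀}‖_{L²} ≤ Cε), there exist ρ₁, ρ₂ ≥ 0 with ρ₁·ρ₂ = 0 such that |z_j(t)| → ρ_j as t → ∞ for j = 1,2; that is, both moduli converge and at least one of the two limits is zero. -/

import Mathlib

noncomputable section
open scoped ENNReal ComplexConjugate
open MeasureTheory Filter Topology Metric Set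

/-- The Hilbert space `ℓ²(ℤ;ℂ)` of square-summable complex sequences indexed by `ℤ`. -/
abbrev Lp2 : Type := lp (fun _ : ℤ => ℂ) 2

namespace DNLS

/-- The discrete Laplacian applied pointwise to a sequence:
`(Δu)(n) = u(n+1) - 2u(n) + u(n-1)`. -/
def lap (u : ℤ → ℂ) (n : ℤ) : ℂ := u (n + 1) - 2 * u n + u (n - 1)

/-- `L` is the bounded operator on `ℓ²` given by the discrete Laplacian `Δ`. -/
def IsDiscreteLaplacian (L : Lp2 →L[ℂ] Lp2) : Prop :=
  ∀ (u : Lp2) (n : ℤ), L u n = lap (⇑u) n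

/-- `T` is the operator of multiplication by the real potential `V`. -/
def IsMulOp (V : ℤ → ℝ) (T : Lp2 →L[ℂ] Lp2) : Prop :=
  ∀ (u : Lp2) (n : ℤ), T u n = V n * u n

/-- `H = -Δ + V` applied pointwise to a sequence. -/
def Hpt (V : ℤ → ℝ) (u : ℤ → ℂ) (n : ℤ) : ℂ := -lap u n + V n * u n

/-- `T` is the discrete Schrödinger operator `H = -Δ + V` on `ℓ²`. -/
def IsSchrodingerOp (V : ℤ → ℝ) (T : Lp2 →L[ℂ] Lp2) : Prop :=
  ∀ (u : Lp2) (n : ℤ), T u n = Hpt V (⇑u) n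

/-- The decay condition `Σ_{n∈ℤ} (1+|n|)|V(n)| < ∞` on the potential. -/
def VCond (V : ℤ → ℝ) : Prop := Summable fun n : ℤ => (1 + |(n : ℝ)|) * |V n|

/-- `ℝ≥0∞`-valued weighted `ℓ²` norm with weight `e^{w n}`:
`(Σ_n e^{w n} ‖f n‖²)^{1/2}`. -/
def wnorm (w : ℤ → ℝ) (f : ℤ → ℂ) : ℝ≥0∞ :=
  (∑' n : ℤ, ENNReal.ofReal (Real.exp (w n) * ‖f n‖ ^ 2)) ^ (1/2 : ℝ)

/-- Weight exponent of the exponentially weighted space `ℓ^a_e`: weight `e^{2a|n|}`. -/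
def expw (a : ℝ) (n : ℤ) : ℝ := 2 * a * |(n : ℝ)|

/-- Weight exponent of the polynomially weighted space `ℓ^{2,σ}`: weight `⟨n⟩^{2σ} = (1+n²)^σ`. -/
def polw (σ : ℝ) (n : ℤ) : ℝ := σ * Real.log (1 + (n : ℝ) ^ 2)

/-- The (complex) pairing `(f,g) = Σ_n f(n) conj(g(n))`. -/
def cpair (f g : ℤ → ℂ) : ℂ := ∑' n : ℤ, f n * conj (g n)

/-- The real inner product `⟨f,g⟩ = Re Σ_n f(n) conj(g(n))`. -/
def rpair (f g : ℤ → ℂ) : ℝ := (cpair f g).re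

/-- The nonlinearity `β(s) = s³ + Σ_{j=4}^M λ_j s^j`. -/
def betaF (M : ℕ) (lam : ℕ → ℝ) (s : ℝ) : ℝ := s ^ 3 + ∑ j ∈ Finset.Icc 4 M, lam j * s ^ j

/-- `B(s) = ∫₀ˢ β(τ) dτ`. -/
def Bfun (M : ℕ) (lam : ℕ → ℝ) (s : ℝ) : ℝ := ∫ τ in (0:ℝ)..s, betaF M lam τ

/-- The conserved energy `E(u) = ½⟨Hu,u⟩ + ½ Σ_n B(|u(n)|²)`. -/
def energy (Hop : Lp2 →L[ℂ] Lp2) (M : ℕ) (lam : ℕ → ℝ) (u : Lp2) : ℝ :=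
  (1/2) * rpair (⇑(Hop u)) ⇑u + (1/2) * ∑' n : ℤ, Bfun M lam (‖u n‖ ^ 2)

/-- `u` is a global solution of the DNLS `i ∂ₜ u = H u + β(|u|²)u`, of class `C¹(ℝ; ℓ²)`. -/
def IsSol (Hop : Lp2 →L[ℂ] Lp2) (M : ℕ) (lam : ℕ → ℝ) (u : ℝ → Lp2) : Prop :=
  ∃ u' : ℝ → Lp2, Continuous u' ∧ ∀ t : ℝ, HasDerivAt u (u' t) t ∧
    ∀ n : ℤ, Complex.I * u' t n = Hop (u t) n + (betaF M lam (‖u t n‖ ^ 2) : ℂ) * u t n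

/-- The rank-two real-orthogonal projection (sequence level) onto the span of
`φ, iφ` with respect to the real inner product. -/
def projSeq (φ : ℤ → ℂ) (f : ℤ → ℂ) (n : ℤ) : ℂ :=
  (rpair f φ : ℝ) * φ n + (rpair f (fun m => Complex.I * φ m) : ℝ) * (Complex.I * φ n)

/-- The projection `P_c` onto the continuous subspace, at the level of sequences. -/
def PcSeq (φ₁ φ₂ : ℤ → ℂ) (f : ℤ → ℂ) (n : ℤ) : ℂ := f n - projSeq φ₁ f n - projSeq φ₂ f n

/-- The projection `P_c u = u - Σ_{j,A} ⟨u, φ_{j,A}⟩ φ_{j,A}` on `ℓ²`. -/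
def PcL (φ₁ φ₂ : Lp2) (u : Lp2) : Lp2 :=
  u - rpair ⇑u ⇑φ₁ • φ₁ - rpair ⇑u (fun n => Complex.I * φ₁ n) • (Complex.I • φ₁)
    - rpair ⇑u ⇑φ₂ • φ₂ - rpair ⇑u (fun n => Complex.I * φ₂ n) • (Complex.I • φ₂)

/-- The symplectic form `Ω(X,Y) = ⟨iX, Y⟩` on `ℓ²`. -/
def Om (X Y : Lp2) : ℝ := rpair (fun n => Complex.I * X n) ⇑Y

end DNLS
namespace DNLS

/-- The normal-form model system \eqref{intro41}–\eqref{intro43} on `[0,∞)`: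
`i ż₁ = e₁z₁ + A₁(|z₁|²,|z₂|²)z₁ + (N₀-1) z̄₁^{N₀-2} z₂^{N₀} (G,η) + 𝓡₁`,
`i ż₂ = e₂z₂ + A₂(|z₁|²,|z₂|²)z₂ + N₀ z₁^{N₀-1} z̄₂^{N₀-1} (Ḡ,η̄) + 𝓡₂`,
`i ∂ₜη = Hη + P_c β(|η|²)η + z̄₁^{N₀-1} z₂^{N₀} G + 𝓡_η`,
with the remainders obeying the stated weighted bounds with constant `cR`. -/
def ModelSystem (V : ℤ → ℝ) (M : ℕ) (lam : ℕ → ℝ) (φ₁ φ₂ : Lp2) (e₁ e₂ : ℝ) (N₀ : ℕ)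
    (a : ℝ) (G : ℤ → ℂ) (A₁ A₂ : ℝ → ℝ → ℝ) (cR : ℝ)
    (z₁ z₂ : ℝ → ℂ) (η : ℝ → Lp2) : Prop :=
  ∃ (z₁' z₂' : ℝ → ℂ) (η' : ℝ → Lp2) (R₁ R₂ : ℝ → ℂ) (Rη : ℝ → ℤ → ℂ),
    (∀ t ∈ Set.Ici (0:ℝ), HasDerivWithinAt z₁ (z₁' t) (Set.Ici 0) t) ∧
    (∀ t ∈ Set.Ici (0:ℝ), HasDerivWithinAt z₂ (z₂' t) (Set.Ici 0) t) ∧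
    (∀ t ∈ Set.Ici (0:ℝ), HasDerivWithinAt η (η' t) (Set.Ici 0) t) ∧
    (∀ t ∈ Set.Ici (0:ℝ),
      Complex.I * z₁' t = (e₁ : ℂ) * z₁ t +
        (A₁ (‖z₁ t‖ ^ 2) (‖z₂ t‖ ^ 2) : ℝ) * z₁ t +
        ((N₀ : ℂ) - 1) * (conj (z₁ t)) ^ (N₀ - 2) * (z₂ t) ^ N₀ * cpair G ⇑(η t) + R₁ t) ∧
    (∀ t ∈ Set.Ici (0:ℝ),
      Complex.I * z₂' t = (e₂ : ℂ) * z₂ t +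
        (A₂ (‖z₁ t‖ ^ 2) (‖z₂ t‖ ^ 2) : ℝ) * z₂ t +
        (N₀ : ℂ) * (z₁ t) ^ (N₀ - 1) * (conj (z₂ t)) ^ (N₀ - 1) *
          conj (cpair G ⇑(η t)) + R₂ t) ∧
    (∀ t ∈ Set.Ici (0:ℝ), ∀ n : ℤ,
      Complex.I * η' t n = Hpt V ⇑(η t) n +
        PcSeq ⇑φ₁ ⇑φ₂ (fun m => (betaF M lam (‖η t m‖ ^ 2) : ℂ) * η t m) n +
        (conj (z₁ t)) ^ (N₀ - 1) * (z₂ t) ^ N₀ * G n + Rη t n) ∧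
    (∀ t ∈ Set.Ici (0:ℝ),
      ENNReal.ofReal ‖R₁ t‖ ≤
        ENNReal.ofReal (cR * (‖z₁ t‖ + ‖z₂ t‖)) *
          (ENNReal.ofReal (‖(z₁ t) ^ (N₀ - 1) * (z₂ t) ^ N₀‖ ^ 2) +
            (wnorm (expw (-a)) ⇑(η t)) ^ (2 : ℕ)) +
        ENNReal.ofReal cR * (wnorm (expw (-a)) ⇑(η t)) ^ (3 : ℕ)) ∧
    (∀ t ∈ Set.Ici (0:ℝ),
      ENNReal.ofReal ‖R₂ t‖ ≤
        ENNReal.ofReal (cR * (‖z₁ t‖ + ‖z₂ t‖)) *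
          (ENNReal.ofReal (‖(z₁ t) ^ (N₀ - 1) * (z₂ t) ^ N₀‖ ^ 2) +
            (wnorm (expw (-a)) ⇑(η t)) ^ (2 : ℕ)) +
        ENNReal.ofReal cR * (wnorm (expw (-a)) ⇑(η t)) ^ (3 : ℕ)) ∧
    (∀ t ∈ Set.Ici (0:ℝ),
      wnorm (expw a) (Rη t) ≤
        ENNReal.ofReal (cR * (‖z₁ t‖ + ‖z₂ t‖) ^ 2) *
          (ENNReal.ofReal ‖(z₁ t) ^ (N₀ - 1) * (z₂ t) ^ N₀‖ +
            wnorm (expw (-a)) ⇑(η t)) +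
        ENNReal.ofReal cR * (wnorm (expw (-a)) ⇑(η t)) ^ (2 : ℕ))

end DNLS

/-!
Write the equation for `z_j` as `i ż_j = μ_j z_j + F_j` with `μ_j` real. Then
`d/dt |z_j|² = 2 Im (F_j conj z_j)` sees only the coupling and remainder terms, which the a priori
smallness bounds by `|z₁^{N₀-1} z₂^{N₀}|² + ‖η‖²_{ℓ^{-a}_e}` (the pairing `(G, η)` by weighted
Cauchy–Schwarz). This is integrable in time: the first term by the `L²` bound on the resonant
monomial, the second by the smoothing estimate since `e^{-2a|n|} ≲ ⟨n⟩^{-2σ}`. Hence each `|z_j|²`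
has an integrable derivative and converges, and as `z₁^{N₀-1} z₂^{N₀} ∈ L²(0, ∞)` the limit
`ρ₁^{N₀-1} ρ₂^{N₀}` of its modulus vanishes.
-/

theorem ENNReal.tsum_mul_le_L2_mul_L2 {ι : Type*} [Countable ι] [MeasurableSpace ι]
    [MeasurableSingletonClass ι] (u v : ι → ℝ≥0∞) :
    ∑' i, u i * v i ≤ (∑' i, u i ^ 2) ^ (1 / 2 : ℝ) * (∑' i, v i ^ 2) ^ (1 / 2 : ℝ) := by
  have h := ENNReal.lintegral_mul_le_Lp_mul_Lq Measure.count Real.HolderConjugate.two_two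
    (measurable_of_countable u).aemeasurable (measurable_of_countable v).aemeasurable
  simp only [lintegral_count, Pi.mul_apply, ENNReal.rpow_two] at h
  exact h

theorem tendsto_norm_of_lintegral_abs_inner_deriv_ne_top {E : Type*} [NormedAddCommGroup E]
    [InnerProductSpace ℝ E] {z z' : ℝ → E} {D : ℝ → ℝ≥0∞} {a : ℝ}
    (hz : ∀ t ∈ Ioi a, HasDerivAt z (z' t) t)
    (hbound : ∀ t ∈ Ioi a, ENNReal.ofReal (2 * |inner ℝ (z t) (z' t)|) ≤ D t)
    (hD : ∫⁻ t in Ioi a, D t ≠ ⊤) :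
    ∃ ρ, 0 ≤ ρ ∧ Tendsto (fun t => ‖z t‖) atTop (𝓝 ρ) := by
  have hderiv : ∀ t ∈ Ioi a, HasDerivAt (fun t => ‖z t‖ ^ 2) (2 * inner ℝ (z t) (z' t)) t :=
    fun t ht => (hz t ht).norm_sq
  have hmeas : AEStronglyMeasurable (fun t => 2 * inner ℝ (z t) (z' t)) (volume.restrict (Ioi a)) :=
    (aestronglyMeasurable_deriv _ _).congr <| (ae_restrict_iff' measurableSet_Ioi).2 <|
      ae_of_all _ fun t ht => (hderiv t ht).deriv
  have hfin : HasFiniteIntegral D (volume.restrict (Ioi a)) := by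
    simpa [HasFiniteIntegral] using hD.lt_top
  have hint : IntegrableOn (fun t => 2 * inner ℝ (z t) (z' t)) (Ioi a) :=
    ⟨hmeas, hfin.mono'_enorm <| (ae_restrict_iff' measurableSet_Ioi).2 <| ae_of_all _ fun t ht => by
      rw [Real.enorm_eq_ofReal_abs, abs_mul, abs_two]; exact hbound t ht⟩
  refine ⟨√(limUnder atTop fun t => ‖z t‖ ^ 2), Real.sqrt_nonneg _, ?_⟩
  simpa [Function.comp_def, Real.sqrt_sq (norm_nonneg _)] using
    (Real.continuous_sqrt.tendsto _).comp
      (tendsto_limUnder_of_hasDerivAt_of_integrableOn_Ioi hderiv hint)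

theorem nonpos_of_tendsto_of_lintegral_ne_top {h : ℝ → ℝ} {L a : ℝ} (hh : Tendsto h atTop (𝓝 L))
    (hfin : ∫⁻ t in Ioi a, ENNReal.ofReal (h t) ≠ ⊤) : L ≤ 0 := by
  by_contra! hL
  obtain ⟨T, hT⟩ := eventually_atTop.1 (hh.eventually (lt_mem_nhds (half_lt_self hL)))
  refine hfin (eq_top_iff.2 ?_)
  calc ⊤ = ∫⁻ _ in Ioi (max a T), ENNReal.ofReal (L / 2) := by simp [hL]
    _ ≤ ∫⁻ t in Ioi (max a T), ENNReal.ofReal (h t) :=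
      setLIntegral_mono' measurableSet_Ioi fun t ht =>
        ENNReal.ofReal_le_ofReal (hT t ((le_max_right a T).trans ht.le)).le
    _ ≤ ∫⁻ t in Ioi a, ENNReal.ofReal (h t) := lintegral_mono_set (Ioi_subset_Ioi (le_max_left a T))

theorem mul_eq_zero_of_tendsto_norm_of_lintegral_ne_top {z₁ z₂ : ℝ → ℂ} {ρ₁ ρ₂ a : ℝ} {m n : ℕ}
    (h₁ : Tendsto (fun t => ‖z₁ t‖) atTop (𝓝 ρ₁)) (h₂ : Tendsto (fun t => ‖z₂ t‖) atTop (𝓝 ρ₂))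
    (hfin : ∫⁻ t in Ioi a, ENNReal.ofReal (‖z₁ t ^ m * z₂ t ^ n‖ ^ 2) ≠ ⊤) : ρ₁ * ρ₂ = 0 := by
  have hlim : Tendsto (fun t => ‖z₁ t ^ m * z₂ t ^ n‖ ^ 2) atTop (𝓝 ((ρ₁ ^ m * ρ₂ ^ n) ^ 2)) := by
    simpa only [norm_mul, norm_pow] using ((h₁.pow m).mul (h₂.pow n)).pow 2
  have hzero : (ρ₁ ^ m * ρ₂ ^ n) ^ 2 = 0 :=
    le_antisymm (nonpos_of_tendsto_of_lintegral_ne_top hlim hfin) (sq_nonneg _)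
  rcases mul_eq_zero.1 (eq_zero_of_pow_eq_zero hzero) with h | h
  · rw [eq_zero_of_pow_eq_zero h, zero_mul]
  · rw [eq_zero_of_pow_eq_zero h, mul_zero]

open Complex in
theorem Complex.abs_inner_le_of_I_mul_eq {z z' P : ℂ} {μ : ℝ} (h : I * z' = μ * z + P) :
    |inner ℝ z z'| ≤ ‖z‖ * ‖P‖ := by
  have hz' : z' = -I * (μ * z + P) := by
    rw [← h, ← mul_assoc, neg_mul, I_mul_I, neg_neg, one_mul]
  have hinner : inner ℝ z z' = (P * conj z).im := by
    rw [Complex.inner, hz']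
    simp only [mul_re, mul_im, neg_re, neg_im, I_re, I_im, add_re, add_im, ofReal_re,
      ofReal_im, conj_re, conj_im]
    ring
  rw [hinner, mul_comm, ← RCLike.norm_conj z, ← norm_mul]
  exact abs_im_le_norm _

namespace DNLS

lemma wnorm_sq (w : ℤ → ℝ) (f : ℤ → ℂ) :
    wnorm w f ^ 2 = ∑' n, ENNReal.ofReal (Real.exp (w n) * ‖f n‖ ^ 2) := by
  rw [wnorm, ← ENNReal.rpow_natCast, ← ENNReal.rpow_mul]
  norm_num

lemma wnorm_eq_tsum_sq (w : ℤ → ℝ) (f : ℤ → ℂ) :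
    wnorm w f = (∑' n, (ENNReal.ofReal (Real.exp (w n / 2)) * ‖f n‖ₑ) ^ 2) ^ (1 / 2 : ℝ) := by
  rw [wnorm]
  congr 2 with n
  rw [mul_pow, ← ENNReal.ofReal_pow (Real.exp_nonneg _), ← Real.exp_nat_mul, ← ofReal_norm,
    ← ENNReal.ofReal_pow (norm_nonneg _), ← ENNReal.ofReal_mul (Real.exp_nonneg _)]
  norm_num [mul_div_cancel₀]

lemma wnorm_sq_le_of_le_add {w₁ w₂ : ℤ → ℝ} {c : ℝ} (h : ∀ n, w₁ n ≤ w₂ n + c) (f : ℤ → ℂ) :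
    wnorm w₁ f ^ 2 ≤ ENNReal.ofReal (Real.exp c) * wnorm w₂ f ^ 2 := by
  rw [wnorm_sq, wnorm_sq, ← ENNReal.tsum_mul_left]
  refine ENNReal.tsum_le_tsum fun n => ?_
  rw [← ENNReal.ofReal_mul (Real.exp_nonneg _), ← mul_assoc, ← Real.exp_add, add_comm c]
  gcongr
  exact h n

lemma wnorm_zero_sq (f : Lp2) : wnorm 0 f ^ 2 = ENNReal.ofReal (‖f‖ ^ 2) := by
  have hsum : HasSum (fun n => ‖f n‖ ^ 2) (‖f‖ ^ 2) := by
    simpa using lp.hasSum_norm (p := 2) (by norm_num) f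
  rw [wnorm_sq, ← ENNReal.ofReal_tsum_of_nonneg (fun n => by positivity), ← hsum.tsum_eq]
  · simp
  · simpa using hsum.summable

lemma wnorm_expw_neg_le_norm {a : ℝ} (ha : 0 ≤ a) (f : Lp2) :
    wnorm (expw (-a)) f ≤ ENNReal.ofReal ‖f‖ := by
  have h := wnorm_sq_le_of_le_add (w₁ := expw (-a)) (w₂ := 0) (c := 0)
    (fun n => by simp only [expw, Pi.zero_apply]; nlinarith [abs_nonneg (n : ℝ)]) f
  rw [Real.exp_zero, ENNReal.ofReal_one, one_mul, wnorm_zero_sq,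
    ENNReal.ofReal_pow (norm_nonneg f)] at h
  exact (ENNReal.pow_le_pow_left_iff two_ne_zero).1 h

lemma expw_neg_le_polw_neg_add {a σ : ℝ} (ha : 0 < a) (hσ : 0 < σ) (n : ℤ) :
    expw (-a) n ≤ polw (-σ) n + (2 * a - 2 * σ * (1 + Real.log (a / σ))) := by
  set x := |(n : ℝ)|
  have hx : 0 ≤ x := abs_nonneg _
  have hsq : 1 + (n : ℝ) ^ 2 ≤ (1 + x) ^ 2 := by
    rw [← sq_abs (n : ℝ)]; nlinarith
  have hlog_sq : Real.log (1 + (n : ℝ) ^ 2) ≤ 2 * Real.log (1 + x) := by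
    simpa only [Real.log_pow, Nat.cast_ofNat] using Real.log_le_log (by positivity) hsq
  -- the constant comes from the tangent line of `log` at `σ / a`
  have htangent : Real.log (a / σ * (1 + x)) ≤ a / σ * (1 + x) - 1 :=
    Real.log_le_sub_one_of_pos (by positivity)
  rw [Real.log_mul (by positivity) (by positivity)] at htangent
  have hscale : σ * (a / σ) = a := by field_simp
  simp only [expw, polw]
  nlinarith

lemma enorm_cpair_le (b : ℝ) (G f : ℤ → ℂ) :
    ‖cpair G f‖ₑ ≤ wnorm (expw b) G * wnorm (expw (-b)) f := by
  rw [wnorm_eq_tsum_sq, wnorm_eq_tsum_sq]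
  refine enorm_tsum_le_tsum_enorm.trans (le_of_eq_of_le (tsum_congr fun n => ?_)
    (ENNReal.tsum_mul_le_L2_mul_L2 _ _))
  rw [enorm_mul, RCLike.enorm_conj, mul_mul_mul_comm, ← ENNReal.ofReal_mul (Real.exp_nonneg _),
    ← Real.exp_add]
  simp [expw, ← add_div]

lemma norm_mul_norm_coupling₁_le {N : ℕ} (hN : 2 ≤ N) (z₁ z₂ c : ℂ) :
    ‖z₁‖ * ‖((N : ℂ) - 1) * conj z₁ ^ (N - 2) * z₂ ^ N * c‖ ≤
      N * ‖z₁ ^ (N - 1) * z₂ ^ N‖ * ‖c‖ := by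
  have hcoef : ‖(N : ℂ) - 1‖ ≤ N := by
    rw [← Nat.cast_one, ← Nat.cast_sub (by omega), Complex.norm_natCast]
    exact_mod_cast Nat.sub_le N 1
  have hpow : ‖z₁‖ * ‖z₁‖ ^ (N - 2) = ‖z₁‖ ^ (N - 1) := by
    rw [← pow_succ']; congr 1; omega
  calc ‖z₁‖ * ‖((N : ℂ) - 1) * conj z₁ ^ (N - 2) * z₂ ^ N * c‖
      = ‖(N : ℂ) - 1‖ * ‖z₁ ^ (N - 1) * z₂ ^ N‖ * ‖c‖ := by
        simp only [norm_mul, norm_pow, RCLike.norm_conj, ← hpow]; ring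
    _ ≤ N * ‖z₁ ^ (N - 1) * z₂ ^ N‖ * ‖c‖ := by gcongr

lemma norm_mul_norm_coupling₂_eq {N : ℕ} (hN : 1 ≤ N) (z₁ z₂ c : ℂ) :
    ‖z₂‖ * ‖(N : ℂ) * z₁ ^ (N - 1) * conj z₂ ^ (N - 1) * conj c‖ =
      N * ‖z₁ ^ (N - 1) * z₂ ^ N‖ * ‖c‖ := by
  have hpow : ‖z₂‖ * ‖z₂‖ ^ (N - 1) = ‖z₂‖ ^ N := by
    rw [← pow_succ']; congr 1; omega
  simp only [norm_mul, norm_pow, RCLike.norm_conj, Complex.norm_natCast, ← hpow]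
  ring

lemma norm_le_of_remainder_bound {R : ℂ} {cR s X r : ℝ} {W : ℝ≥0∞} (hcR : 0 ≤ cR) (hs : 0 ≤ s)
    (hX : 0 ≤ X) (hsr : s ≤ r) (hWr : W ≤ ENNReal.ofReal r)
    (h : ENNReal.ofReal ‖R‖ ≤ ENNReal.ofReal (cR * s) * (ENNReal.ofReal X + W ^ 2) +
      ENNReal.ofReal cR * W ^ 3) :
    ‖R‖ ≤ 2 * cR * r * (X + W.toReal ^ 2) := by
  set w := W.toReal
  have hW : W = ENNReal.ofReal w :=
    (ENNReal.ofReal_toReal (ne_top_of_le_ne_top ENNReal.ofReal_ne_top hWr)).symm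
  have hw : 0 ≤ w := ENNReal.toReal_nonneg
  have hwr : w ≤ r := by rwa [hW, ENNReal.ofReal_le_ofReal_iff (hs.trans hsr)] at hWr
  rw [hW, ← ENNReal.ofReal_pow hw, ← ENNReal.ofReal_pow hw, ← ENNReal.ofReal_add hX (by positivity),
    ← ENNReal.ofReal_mul (by positivity), ← ENNReal.ofReal_mul hcR,
    ← ENNReal.ofReal_add (by positivity) (by positivity),
    ENNReal.ofReal_le_ofReal_iff (by positivity)] at h
  have hcube : cR * w ^ 3 ≤ cR * r * w ^ 2 := by
    have := mul_le_mul_of_nonneg_left hwr (mul_nonneg hcR (sq_nonneg w)); nlinarith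
  have hlin : cR * s * (X + w ^ 2) ≤ cR * r * (X + w ^ 2) := by gcongr
  nlinarith [mul_nonneg (mul_nonneg hcR (hs.trans hsr)) hX]

lemma two_mul_abs_inner_le {z z' F R : ℂ} {μ N Zn p g w cR r : ℝ}
    (h : Complex.I * z' = μ * z + (F + R)) (hF : ‖z‖ * ‖F‖ ≤ N * Zn * p) (hp : p ≤ g * w)
    (hR : ‖R‖ ≤ 2 * cR * r * (Zn ^ 2 + w ^ 2)) (hz : ‖z‖ ≤ r) (hN : 0 ≤ N) (hZn : 0 ≤ Zn)
    (hg : 0 ≤ g) :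
    2 * |inner ℝ z z'| ≤ (N * g + 4 * cR * r ^ 2) * (Zn ^ 2 + w ^ 2) := by
  have hsplit : ‖z‖ * ‖F + R‖ ≤ ‖z‖ * ‖F‖ + ‖z‖ * ‖R‖ := by
    rw [← mul_add]; gcongr; exact norm_add_le F R
  have hFp : N * Zn * p ≤ N * Zn * (g * w) := by gcongr
  have hamgm : N * g * (2 * (Zn * w)) ≤ N * g * (Zn ^ 2 + w ^ 2) := by
    gcongr; nlinarith [sq_nonneg (Zn - w)]
  have hRr : ‖z‖ * ‖R‖ ≤ r * (2 * cR * r * (Zn ^ 2 + w ^ 2)) :=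
    mul_le_mul hz hR (norm_nonneg R) ((norm_nonneg z).trans hz)
  have := Complex.abs_inner_le_of_I_mul_eq h
  nlinarith

def drivingSq (a : ℝ) (N₀ : ℕ) (z₁ z₂ : ℝ → ℂ) (η : ℝ → Lp2) (t : ℝ) : ℝ≥0∞ :=
  ENNReal.ofReal (‖z₁ t ^ (N₀ - 1) * z₂ t ^ N₀‖ ^ 2) + wnorm (expw (-a)) ⇑(η t) ^ 2

lemma ModelSystem.exists_abs_inner_deriv_le {V : ℤ → ℝ} {M : ℕ} {lam : ℕ → ℝ} {φ₁ φ₂ : Lp2}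
    {e₁ e₂ : ℝ} {N₀ : ℕ} {a : ℝ} {G : ℤ → ℂ} {A₁ A₂ : ℝ → ℝ → ℝ} {cR : ℝ} {z₁ z₂ : ℝ → ℂ}
    {η : ℝ → Lp2} (hsys : ModelSystem V M lam φ₁ φ₂ e₁ e₂ N₀ a G A₁ A₂ cR z₁ z₂ η)
    (hN₀ : 2 ≤ N₀) (ha : 0 ≤ a) (hG : wnorm (expw a) G ≠ ⊤) (hcR : 0 ≤ cR) {r : ℝ}
    (hr : ∀ t ∈ Ici (0 : ℝ), ‖η t‖ ≤ r ∧ ‖z₁ t‖ + ‖z₂ t‖ ≤ r) :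
    ∃ (z₁' z₂' : ℝ → ℂ) (c : ℝ), (∀ t ∈ Ioi (0 : ℝ), HasDerivAt z₁ (z₁' t) t) ∧
      (∀ t ∈ Ioi (0 : ℝ), HasDerivAt z₂ (z₂' t) t) ∧
      ∀ t ∈ Ici (0 : ℝ),
        ENNReal.ofReal (2 * |inner ℝ (z₁ t) (z₁' t)|) ≤
          ENNReal.ofReal c * drivingSq a N₀ z₁ z₂ η t ∧
        ENNReal.ofReal (2 * |inner ℝ (z₂ t) (z₂' t)|) ≤
          ENNReal.ofReal c * drivingSq a N₀ z₁ z₂ η t := by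
  obtain ⟨z₁', z₂', -, R₁, R₂, -, hdz₁, hdz₂, -, heq₁, heq₂, -, hR₁, hR₂, -⟩ := hsys
  set g := (wnorm (expw a) G).toReal
  refine ⟨z₁', z₂', N₀ * g + 4 * cR * r ^ 2,
    fun t ht => (hdz₁ t (Ioi_subset_Ici_self ht)).hasDerivAt (Ici_mem_nhds ht),
    fun t ht => (hdz₂ t (Ioi_subset_Ici_self ht)).hasDerivAt (Ici_mem_nhds ht), fun t ht => ?_⟩
  obtain ⟨hηr, hzr⟩ := hr t ht
  have hWr : wnorm (expw (-a)) (η t) ≤ ENNReal.ofReal r :=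
    (wnorm_expw_neg_le_norm ha _).trans (ENNReal.ofReal_le_ofReal hηr)
  have hW : wnorm (expw (-a)) (η t) ≠ ⊤ := ne_top_of_le_ne_top ENNReal.ofReal_ne_top hWr
  have hpair : ‖cpair G (η t)‖ ≤ g * (wnorm (expw (-a)) (η t)).toReal := by
    have := enorm_cpair_le a G (η t)
    rwa [← ofReal_norm, ← ENNReal.ofReal_toReal hG, ← ENNReal.ofReal_toReal hW,
      ← ENNReal.ofReal_mul ENNReal.toReal_nonneg,
      ENNReal.ofReal_le_ofReal_iff (by positivity)] at this
  have hc : 0 ≤ (N₀ : ℝ) * g + 4 * cR * r ^ 2 := by positivity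
  have hdrive : ENNReal.ofReal ((N₀ * g + 4 * cR * r ^ 2) *
      (‖z₁ t ^ (N₀ - 1) * z₂ t ^ N₀‖ ^ 2 + (wnorm (expw (-a)) (η t)).toReal ^ 2)) =
      ENNReal.ofReal (N₀ * g + 4 * cR * r ^ 2) * drivingSq a N₀ z₁ z₂ η t := by
    rw [drivingSq, ENNReal.ofReal_mul hc]
    congr 1
    rw [ENNReal.ofReal_add (by positivity) (by positivity),
      ENNReal.ofReal_pow ENNReal.toReal_nonneg, ENNReal.ofReal_toReal hW]
  have hs : 0 ≤ ‖z₁ t‖ + ‖z₂ t‖ := by positivity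
  rw [← hdrive]
  constructor
  · refine ENNReal.ofReal_le_ofReal (two_mul_abs_inner_le (μ := e₁ + A₁ (‖z₁ t‖ ^ 2) (‖z₂ t‖ ^ 2))
      (by rw [heq₁ t ht]; push_cast; ring) (norm_mul_norm_coupling₁_le hN₀ _ _ _) hpair
      (norm_le_of_remainder_bound hcR hs (sq_nonneg _) hzr hWr (hR₁ t ht))
      (by linarith [norm_nonneg (z₂ t)]) (Nat.cast_nonneg _) (norm_nonneg _) ENNReal.toReal_nonneg)
  · refine ENNReal.ofReal_le_ofReal (two_mul_abs_inner_le (μ := e₂ + A₂ (‖z₁ t‖ ^ 2) (‖z₂ t‖ ^ 2))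
      (by rw [heq₂ t ht]; push_cast; ring) (norm_mul_norm_coupling₂_eq (by omega) _ _ _).le hpair
      (norm_le_of_remainder_bound hcR hs (sq_nonneg _) hzr hWr (hR₂ t ht))
      (by linarith [norm_nonneg (z₁ t)]) (Nat.cast_nonneg _) (norm_nonneg _) ENNReal.toReal_nonneg)

lemma lintegral_drivingSq_ne_top {a σ : ℝ} {N₀ : ℕ} {z₁ z₂ : ℝ → ℂ} {η : ℝ → Lp2} {s : Set ℝ}
    (ha : 0 < a) (hσ : 0 < σ) (hs : MeasurableSet s) (hz₁ : ContinuousOn z₁ s)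
    (hz₂ : ContinuousOn z₂ s)
    (hmonomial : ∫⁻ t in s, ENNReal.ofReal (‖z₁ t ^ (N₀ - 1) * z₂ t ^ N₀‖ ^ 2) ≠ ⊤)
    (hη : ∫⁻ t in s, wnorm (polw (-σ)) ⇑(η t) ^ 2 ≠ ⊤) :
    ∫⁻ t in s, drivingSq a N₀ z₁ z₂ η t ≠ ⊤ := by
  have hmeas : AEMeasurable (fun t => ENNReal.ofReal (‖z₁ t ^ (N₀ - 1) * z₂ t ^ N₀‖ ^ 2))
      (volume.restrict s) :=
    ENNReal.measurable_ofReal.comp_aemeasurable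
      ((((hz₁.pow _).mul (hz₂.pow _)).norm.pow 2).aemeasurable hs)
  simp only [drivingSq]
  rw [lintegral_add_left' hmeas]
  refine ENNReal.add_ne_top.2 ⟨hmonomial, ne_top_of_le_ne_top ?_ (lintegral_mono fun t =>
    wnorm_sq_le_of_le_add (expw_neg_le_polw_neg_add ha hσ) _)⟩
  rw [lintegral_const_mul' _ _ ENNReal.ofReal_ne_top]
  exact ENNReal.mul_ne_top ENNReal.ofReal_ne_top hη

theorem model_system_convergence_general
    (V : ℤ → ℝ) (M : ℕ) (lam : ℕ → ℝ) (φ₁ φ₂ : Lp2)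
    (e₁ e₂ : ℝ)
    (N₀ : ℕ) (hN₀ : 2 ≤ N₀)
    (a : ℝ) (ha : 0 < a) (σ : ℝ) (hσ : 7/2 < σ)
    (G : ℤ → ℂ) (hGmem : wnorm (expw a) G < ⊤)
    (A₁ A₂ : ℝ → ℝ → ℝ)
    (cR : ℝ) (hcR : 0 < cR) (K : ℝ)
    (ε C : ℝ)
    (z₁ z₂ : ℝ → ℂ) (η : ℝ → Lp2)
    (hsys : ModelSystem V M lam φ₁ φ₂ e₁ e₂ N₀ a G A₁ A₂ cR z₁ z₂ η)
    (hapriori : ∀ t ∈ Set.Ici (0:ℝ), ‖η t‖ ≤ K * ε ∧ ‖z₁ t‖ + ‖z₂ t‖ ≤ K * ε)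
    (hsmooth : (∫⁻ t in Set.Ici (0:ℝ), (wnorm (polw (-σ)) ⇑(η t)) ^ (2 : ℕ)) ≤
      ENNReal.ofReal ((C * ε) ^ 2))
    (hL2 : (∫⁻ t in Set.Ici (0:ℝ),
        ENNReal.ofReal (‖(z₁ t) ^ (N₀ - 1) * (z₂ t) ^ N₀‖ ^ 2)) ≤
      ENNReal.ofReal ((C * ε) ^ 2)) :
    ∃ ρ₁ ρ₂ : ℝ, 0 ≤ ρ₁ ∧ 0 ≤ ρ₂ ∧ ρ₁ * ρ₂ = 0 ∧
      Tendsto (fun t => ‖z₁ t‖) atTop (𝓝 ρ₁) ∧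
      Tendsto (fun t => ‖z₂ t‖) atTop (𝓝 ρ₂) := by
  obtain ⟨z₁', z₂', c, hdz₁, hdz₂, hbound⟩ :=
    hsys.exists_abs_inner_deriv_le hN₀ ha.le hGmem.ne hcR.le hapriori
  have hmonomial := ne_top_of_le_ne_top ENNReal.ofReal_ne_top
    ((lintegral_mono_set Ioi_subset_Ici_self).trans hL2)
  have hdriving : ∫⁻ t in Ioi 0, ENNReal.ofReal c * drivingSq a N₀ z₁ z₂ η t ≠ ⊤ := by
    rw [lintegral_const_mul' _ _ ENNReal.ofReal_ne_top]
    exact ENNReal.mul_ne_top ENNReal.ofReal_ne_top <|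
      lintegral_drivingSq_ne_top ha (by linarith) measurableSet_Ioi
        (fun t ht => (hdz₁ t ht).continuousAt.continuousWithinAt)
        (fun t ht => (hdz₂ t ht).continuousAt.continuousWithinAt) hmonomial
        (ne_top_of_le_ne_top ENNReal.ofReal_ne_top
          ((lintegral_mono_set Ioi_subset_Ici_self).trans hsmooth))
  obtain ⟨ρ₁, hρ₁, h₁⟩ := tendsto_norm_of_lintegral_abs_inner_deriv_ne_top hdz₁
    (fun t ht => (hbound t (Ioi_subset_Ici_self ht)).1) hdriving
  obtain ⟨ρ₂, hρ₂, h₂⟩ := tendsto_norm_of_lintegral_abs_inner_deriv_ne_top hdz₂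
    (fun t ht => (hbound t (Ioi_subset_Ici_self ht)).2) hdriving
  exact ⟨ρ₁, ρ₂, hρ₁, hρ₂, mul_eq_zero_of_tendsto_norm_of_lintegral_ne_top h₁ h₂ hmonomial, h₁, h₂⟩

/-- under the hypotheses and conclusions of the bootstrap proposition for
the model system (Fermi Golden Rule `Γ > 0`, small data, a priori bounds, Strichartz and
smoothing bounds, and `‖z₁^{N₀-1}z₂^{N₀}‖_{L²} ≤ Cε`), the moduli `|z₁(t)|, |z₂(t)|`
converge as `t → ∞` to limits `ρ₁, ρ₂ ≥ 0` with `ρ₁ ρ₂ = 0`. -/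
theorem model_system_convergence
    (V : ℤ → ℝ) (hV : VCond V) (M : ℕ) (lam : ℕ → ℝ) (φ₁ φ₂ : Lp2)
    (e₁ e₂ : ℝ) (he12 : e₁ < e₂) (he2 : e₂ < 0)
    (N₀ : ℕ) (hN₀ : 2 ≤ N₀)
    (hres : e₁ + N₀ * (e₂ - e₁) ∈ Set.Ioo (0:ℝ) 4)
    (hresprev : e₁ + ((N₀ : ℝ) - 1) * (e₂ - e₁) < 0)
    (a : ℝ) (ha : 0 < a) (σ : ℝ) (hσ : 7/2 < σ)
    (G RG : ℤ → ℂ) (hGmem : wnorm (expw a) G < ⊤)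
    (hRG : ∀ n : ℤ, Hpt V RG n - ((e₁ + N₀ * (e₂ - e₁) : ℝ) : ℂ) * RG n = G n)
    (hFGR : 0 < -(cpair G RG).im)
    (rA : ℝ) (hrA : 0 < rA) (A₁ A₂ : ℝ → ℝ → ℝ)
    (hA₁ : AnalyticOnNhd ℝ (fun p : ℝ × ℝ => A₁ p.1 p.2) (Metric.ball (0 : ℝ × ℝ) rA))
    (hA₂ : AnalyticOnNhd ℝ (fun p : ℝ × ℝ => A₂ p.1 p.2) (Metric.ball (0 : ℝ × ℝ) rA))
    (cR : ℝ) (hcR : 0 < cR) (K : ℝ) (hK : 0 < K)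
    (ε C : ℝ) (hε : 0 < ε) (hC : 0 < C)
    (z₁ z₂ : ℝ → ℂ) (η : ℝ → Lp2)
    (hsys : ModelSystem V M lam φ₁ φ₂ e₁ e₂ N₀ a G A₁ A₂ cR z₁ z₂ η)
    (hinit : ‖z₁ 0‖ + ‖z₂ 0‖ + ‖η 0‖ ≤ ε)
    (hapriori : ∀ t ∈ Set.Ici (0:ℝ), ‖η t‖ ≤ K * ε ∧ ‖z₁ t‖ + ‖z₂ t‖ ≤ K * ε)
    (hstz : ∀ t ∈ Set.Ici (0:ℝ), ‖η t‖ ≤ C * ε)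
    (hsmooth : (∫⁻ t in Set.Ici (0:ℝ), (wnorm (polw (-σ)) ⇑(η t)) ^ (2 : ℕ)) ≤
      ENNReal.ofReal ((C * ε) ^ 2))
    (hL2 : (∫⁻ t in Set.Ici (0:ℝ),
        ENNReal.ofReal (‖(z₁ t) ^ (N₀ - 1) * (z₂ t) ^ N₀‖ ^ 2)) ≤
      ENNReal.ofReal ((C * ε) ^ 2)) :
    ∃ ρ₁ ρ₂ : ℝ, 0 ≤ ρ₁ ∧ 0 ≤ ρ₂ ∧ ρ₁ * ρ₂ = 0 ∧
      Tendsto (fun t => ‖z₁ t‖) atTop (𝓝 ρ₁) ∧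
      Tendsto (fun t => ‖z₂ t‖) atTop (𝓝 ρ₂) :=
  model_system_convergence_general V M lam φ₁ φ₂ e₁ e₂ N₀ hN₀ a ha σ hσ G hGmem A₁ A₂ cR hcR K ε C
    z₁ z₂ η hsys hapriori hsmooth hL2

end DNLS
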